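/- arXiv:1811.10573 — 2 statements merged into one kernel-verified Lean document; each statement's English description precedes it below -/
import Mathlib

section
/- Let N ≥ 4 and let X be an order-N real tensor with dimensions s₁×⋯×s_N and I(X) > 0. For each l ∈ {2,…,N} let A^{(l)} ∈ ℝ^{s_l×R_l} have orthonormal columns, and let Y^{(1)} = X ×₂ A^{(2)ᵀ} ⋯ ×_N A^{(N)ᵀ}. For distinct i, j ∈ {2,…,N}, let Y^{(i,j,1)} be X contracted in mode l with A^{(l)ᵀ} for every l ∈ {2,…,N}∖{i,j}, and let dA^{(i)} ∈ ℝ^{s_i×R_i}, dA^{(j)} ∈ ℝ^{s_j×R_j} satisfy ‖dA^{(i)}‖₂ ≤ ε and ‖dA^{(j)}‖₂ ≤ ε. Then ‖Y^{(i,j,1)} ×_i dA^{(i)ᵀ} ×_j dA^{(j)ᵀ}‖₂ ≤ κ(X) ε² ‖Y^{(1)}‖₂. -/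
open scoped BigOperators

/-- Euclidean (ℓ²) norm of a vector. -/
noncomputable def vnorm {n : ℕ} (v : Fin n → ℝ) : ℝ := Real.sqrt (∑ i, v i ^ 2)

/-- Frobenius norm: the ℓ² norm of all entries. -/
noncomputable def fnorm {ι : Type*} [Fintype ι] (T : ι → ℝ) : ℝ := Real.sqrt (∑ i, T i ^ 2)

/-- Matrix–vector product. -/
noncomputable def matvec {m n : ℕ} (M : Fin m → Fin n → ℝ) (x : Fin n → ℝ) : Fin m → ℝ :=
  fun i => ∑ j, M i j * x j

/-- Matrix–matrix product. -/
noncomputable def matmul {m n p : ℕ} (A : Fin m → Fin n → ℝ) (B : Fin n → Fin p → ℝ) :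
    Fin m → Fin p → ℝ :=
  fun i j => ∑ k, A i k * B k j

/-- Matrix spectral norm. -/
noncomputable def mnorm {m n : ℕ} (M : Fin m → Fin n → ℝ) : ℝ :=
  sSup {r | ∃ x : Fin n → ℝ, vnorm x = 1 ∧ r = vnorm (matvec M x)}

/-- `I(M)`: the infimum of `‖Mx‖₂` over unit vectors `x`. -/
noncomputable def minf {m n : ℕ} (M : Fin m → Fin n → ℝ) : ℝ :=
  sInf {r | ∃ x : Fin n → ℝ, vnorm x = 1 ∧ r = vnorm (matvec M x)}

/-- Matrix Frobenius norm. -/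
noncomputable def mfro {m n : ℕ} (M : Fin m → Fin n → ℝ) : ℝ :=
  Real.sqrt (∑ i, ∑ j, M i j ^ 2)

/-- The multilinear map `g_T` associated to an order-`(d+1)` tensor `T`;
mode `0` is the output mode, modes `1,…,d` are the input modes. -/
noncomputable def gmap {d : ℕ} {s : Fin (d+1) → ℕ} (T : (∀ i, Fin (s i)) → ℝ)
    (x : ∀ i, Fin (s i) → ℝ) : Fin (s 0) → ℝ :=
  fun i₁ => ∑ j : (∀ i, Fin (s i)),
    if j 0 = i₁ then T j * ∏ k ∈ Finset.univ.erase (0 : Fin (d+1)), x k (j k) else 0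

/-- The inputs `x i`, `i ≠ 0`, are all unit vectors. -/
def unitInputs {d : ℕ} {s : Fin (d+1) → ℕ} (x : ∀ i, Fin (s i) → ℝ) : Prop :=
  ∀ i : Fin (d+1), i ≠ 0 → vnorm (x i) = 1

/-- Tensor spectral norm: supremum of `‖g_T(x₂,…,x_N)‖₂` over unit inputs. -/
noncomputable def tnorm {d : ℕ} {s : Fin (d+1) → ℕ} (T : (∀ i, Fin (s i)) → ℝ) : ℝ :=
  sSup {r | ∃ x : (∀ i, Fin (s i) → ℝ), unitInputs x ∧ r = vnorm (gmap T x)}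

/-- `I(T)`: infimum of `‖g_T(x₂,…,x_N)‖₂` over unit inputs. -/
noncomputable def tinf {d : ℕ} {s : Fin (d+1) → ℕ} (T : (∀ i, Fin (s i)) → ℝ) : ℝ :=
  sInf {r | ∃ x : (∀ i, Fin (s i) → ℝ), unitInputs x ∧ r = vnorm (gmap T x)}

/-- Tensor condition number `κ(T) = ‖T‖₂ / I(T)`. -/
noncomputable def tcond {d : ℕ} {s : Fin (d+1) → ℕ} (T : (∀ i, Fin (s i)) → ℝ) : ℝ :=
  tnorm T / tinf T

/-- Dimensions after replacing the size of mode `n` by `J`. -/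
def repl {d : ℕ} (s : Fin (d+1) → ℕ) (n : Fin (d+1)) (J : ℕ) : Fin (d+1) → ℕ :=
  fun i => if i = n then J else s i

/-- Mode-`n` product `T ×ₙ A` with a matrix `A : Fin J → Fin (s n) → ℝ`:
`(T ×ₙ A)(i₁,…,a,…,i_N) = ∑ₖ T(i₁,…,k,…,i_N) A(a,k)`. -/
noncomputable def modeProd {d : ℕ} {s : Fin (d+1) → ℕ} (T : (∀ i, Fin (s i)) → ℝ)
    (n : Fin (d+1)) {J : ℕ} (A : Fin J → Fin (s n) → ℝ) :
    (∀ i, Fin (repl s n J i)) → ℝ :=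
  fun j => ∑ k : Fin (s n),
    T (fun i => if h : i = n then Fin.cast (congrArg s h.symm) k
        else Fin.cast (show repl s n J i = s i by simp [repl, h]) (j i)) *
      A (Fin.cast (show repl s n J n = J by simp [repl]) (j n)) k

/-- Multilinear transformation of a tensor: `multiProd X B = X ×₁ B₁ ×₂ ⋯ ×_N B_N`. -/
noncomputable def multiProd {d : ℕ} {s R : Fin (d+1) → ℕ}
    (X : (∀ i, Fin (s i)) → ℝ) (B : ∀ l, Fin (R l) → Fin (s l) → ℝ) :
    (∀ l, Fin (R l)) → ℝ :=
  fun j => ∑ k : (∀ l, Fin (s l)), X k * ∏ l, B l (j l) (k l)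

/-- Dimensions of `partialContract`: modes in `E` are kept at size `s l`,
the other modes are contracted down to size `R l`. -/
def keepDims {d : ℕ} (s R : Fin (d+1) → ℕ) (E : Finset (Fin (d+1))) : Fin (d+1) → ℕ :=
  fun l => if l ∈ E then s l else R l

/-- Contract every mode `l ∉ E` of `X` with `(A l)ᵀ`; keep the modes in `E` untouched. -/
noncomputable def partialContract {d : ℕ} {s R : Fin (d+1) → ℕ}
    (X : (∀ i, Fin (s i)) → ℝ) (A : ∀ l, Fin (s l) → Fin (R l) → ℝ)
    (E : Finset (Fin (d+1))) : (∀ l, Fin (keepDims s R E l)) → ℝ :=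
  multiProd X (fun l a b =>
    if h : l ∈ E then
      (if b = Fin.cast (show keepDims s R E l = s l by simp [keepDims, h]) a then (1:ℝ) else 0)
    else A l b (Fin.cast (show keepDims s R E l = R l by simp [keepDims, h]) a))

lemma vnorm_nonneg {n : ℕ} (v : Fin n → ℝ) : 0 ≤ vnorm v := Real.sqrt_nonneg _

lemma sum_cast {n m : ℕ} (h : n = m) (f : Fin m → ℝ) :
    ∑ a : Fin n, f (Fin.cast h a) = ∑ a : Fin m, f a := by subst h; rfl

lemma vnorm_cast {n m : ℕ} (h : n = m) (v : Fin m → ℝ) :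
    vnorm (fun i => v (Fin.cast h i)) = vnorm v := by subst h; rfl

lemma abs_le_vnorm {n : ℕ} (v : Fin n → ℝ) (b : Fin n) : |v b| ≤ vnorm v := by
  rw [← Real.sqrt_sq_eq_abs]
  exact Real.sqrt_le_sqrt (Finset.single_le_sum (f := fun i => v i ^ 2)
    (fun i _ => sq_nonneg _) (Finset.mem_univ b))

lemma vnorm_le_sum_abs {n : ℕ} (v : Fin n → ℝ) : vnorm v ≤ ∑ i, |v i| := by
  rw [show (∑ i, |v i|) = Real.sqrt ((∑ i, |v i|)^2) from
    (Real.sqrt_sq (Finset.sum_nonneg fun i _ => abs_nonneg _)).symm]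
  apply Real.sqrt_le_sqrt
  rw [sq, Finset.sum_mul_sum]
  apply Finset.sum_le_sum
  intro i _
  calc v i ^ 2 = |v i| * |v i| := by rw [← abs_mul, ← sq, abs_sq]
  _ ≤ ∑ j, |v i| * |v j| := Finset.single_le_sum (f := fun j => |v i| * |v j|)
      (fun j _ => mul_nonneg (abs_nonneg _) (abs_nonneg _)) (Finset.mem_univ i)

lemma vnorm_smul {n : ℕ} (c : ℝ) (v : Fin n → ℝ) :
    vnorm (fun i => c * v i) = |c| * vnorm v := by
  unfold vnorm
  rw [show (∑ i, (c * v i)^2) = c^2 * ∑ i, v i ^2 by rw [Finset.mul_sum]; ring_nf,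
    Real.sqrt_mul (sq_nonneg c), Real.sqrt_sq_eq_abs]

lemma vnorm_eq_zero {n : ℕ} {v : Fin n → ℝ} (h : vnorm v = 0) : ∀ b, v b = 0 := by
  intro b
  have h2 : (∑ i, v i ^ 2) = 0 :=
    Real.sqrt_eq_zero (Finset.sum_nonneg fun i _ => sq_nonneg _) |>.mp h
  have := (Finset.sum_eq_zero_iff_of_nonneg (fun i _ => sq_nonneg (v i))).mp h2 b (Finset.mem_univ b)
  exact pow_eq_zero_iff (by norm_num) |>.mp this

lemma mnorm_bddAbove {m n : ℕ} (M : Fin m → Fin n → ℝ) :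
    BddAbove {r | ∃ x : Fin n → ℝ, vnorm x = 1 ∧ r = vnorm (matvec M x)} := by
  refine ⟨∑ i, ∑ j, |M i j|, ?_⟩
  rintro r ⟨x, hx, rfl⟩
  calc vnorm (matvec M x) ≤ ∑ i, |matvec M x i| := vnorm_le_sum_abs _
  _ ≤ ∑ i, ∑ j, |M i j| := by
      apply Finset.sum_le_sum; intro i _
      calc |matvec M x i| ≤ ∑ j, |M i j * x j| := Finset.abs_sum_le_sum_abs _ _
      _ ≤ ∑ j, |M i j| := by
          apply Finset.sum_le_sum; intro j _
          rw [abs_mul]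
          calc |M i j| * |x j| ≤ |M i j| * 1 :=
                mul_le_mul_of_nonneg_left (le_trans (abs_le_vnorm x j) (le_of_eq hx)) (abs_nonneg _)
          _ = |M i j| := mul_one _

lemma mnorm_nonneg {m n : ℕ} (M : Fin m → Fin n → ℝ) : 0 ≤ mnorm M :=
  Real.sSup_nonneg (by rintro r ⟨x, hx, rfl⟩; exact vnorm_nonneg _)

lemma vnorm_matvec_le {m n : ℕ} (M : Fin m → Fin n → ℝ) (x : Fin n → ℝ) (hx : vnorm x = 1) :
    vnorm (matvec M x) ≤ mnorm M :=
  le_csSup (mnorm_bddAbove M) ⟨x, hx, rfl⟩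
section
variable {d : ℕ}

lemma gmap_multiProd {s R' : Fin (d+1) → ℕ} (X : (∀ l, Fin (s l)) → ℝ)
    (B : ∀ l, Fin (R' l) → Fin (s l) → ℝ) (x : ∀ l, Fin (R' l) → ℝ) (i₀ : Fin (R' 0)) :
    gmap (multiProd X B) x i₀ =
      ∑ k : (∀ l, Fin (s l)), X k * B 0 i₀ (k 0) *
        ∏ l ∈ Finset.univ.erase (0 : Fin (d+1)), (∑ a, B l a (k l) * x l a) := by
  classical
  set x' : ∀ l, Fin (R' l) → ℝ :=
    Function.update x 0 (fun a => if a = i₀ then (1:ℝ) else 0) with hx'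
  have key : ∀ (j : ∀ l, Fin (R' l)),
      (if j 0 = i₀ then (multiProd X B j) * ∏ l ∈ Finset.univ.erase (0 : Fin (d+1)), x l (j l) else 0)
      = ∑ k : (∀ l, Fin (s l)), X k * ∏ l, (B l (j l) (k l) * x' l (j l)) := by
    intro j
    have hsplit : ∀ k : (∀ l, Fin (s l)),
        (∏ l, (B l (j l) (k l) * x' l (j l)))
        = (∏ l, B l (j l) (k l)) *
          ((if j 0 = i₀ then (1:ℝ) else 0) * ∏ l ∈ Finset.univ.erase (0 : Fin (d+1)), x l (j l)) := by
      intro k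
      rw [Finset.prod_mul_distrib]
      congr 1
      rw [← Finset.mul_prod_erase Finset.univ _ (Finset.mem_univ (0 : Fin (d+1)))]
      have e0 : x' 0 (j 0) = if j 0 = i₀ then (1:ℝ) else 0 := by simp [hx']
      rw [e0]
      congr 1
      apply Finset.prod_congr rfl
      intro l hl
      rw [hx', Function.update_of_ne (Finset.ne_of_mem_erase hl)]
    simp only [hsplit]
    split_ifs with h
    · rw [multiProd, Finset.sum_mul]
      apply Finset.sum_congr rfl; intro k _; ring
    · simp
  rw [gmap]
  simp only [key]
  rw [Finset.sum_comm]
  apply Finset.sum_congr rfl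
  intro k _
  rw [← Finset.mul_sum, ← Fintype.prod_sum (fun l (a : Fin (R' l)) => B l a (k l) * x' l a),
      ← Finset.mul_prod_erase Finset.univ _ (Finset.mem_univ (0 : Fin (d+1)))]
  have h1 : (∑ a, B 0 a (k 0) * x' 0 a) = B 0 i₀ (k 0) := by
    simp [hx', mul_ite]
  have h2 : (∏ l ∈ Finset.univ.erase (0:Fin (d+1)), ∑ a, B l a (k l) * x' l a)
      = ∏ l ∈ Finset.univ.erase (0:Fin (d+1)), ∑ a, B l a (k l) * x l a := by
    apply Finset.prod_congr rfl; intro l hl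
    apply Finset.sum_congr rfl; intro a _
    rw [show x' l = x l from Function.update_of_ne (Finset.ne_of_mem_erase hl) _ _]
  rw [h1, h2, mul_assoc]
end
section
variable {d : ℕ} {s R : Fin (d+1) → ℕ}

lemma keepDims_zero : keepDims s R ({0} : Finset (Fin (d+1))) 0 = s 0 := by
  simp [keepDims]

lemma keepDims_ne (l : Fin (d+1)) (hl : l ≠ 0) :
    keepDims s R ({0} : Finset (Fin (d+1))) l = R l := by
  simp [keepDims, hl]

/-- The lifted inputs: `y l = (C l) · (x l)` for `l ≠ 0`, junk at `l = 0`. -/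
noncomputable def ycon (C : ∀ l, Fin (s l) → Fin (R l) → ℝ)
    (x : ∀ l, Fin (keepDims s R ({0} : Finset (Fin (d+1))) l) → ℝ) :
    ∀ l, Fin (s l) → ℝ :=
  fun l b => if h : l = 0 then 0 else
    ∑ a : Fin (keepDims s R ({0} : Finset (Fin (d+1))) l),
      C l b (Fin.cast (keepDims_ne l h) a) * x l a

lemma gmap_partialContract (X : (∀ l, Fin (s l)) → ℝ)
    (C : ∀ l, Fin (s l) → Fin (R l) → ℝ)
    (x : ∀ l, Fin (keepDims s R ({0} : Finset (Fin (d+1))) l) → ℝ)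
    (i₀ : Fin (keepDims s R ({0} : Finset (Fin (d+1))) 0)) :
    gmap (partialContract X C {0}) x i₀ =
      gmap X (ycon C x) (Fin.cast keepDims_zero i₀) := by
  classical
  rw [partialContract, gmap_multiProd, gmap]
  apply Finset.sum_congr rfl
  intro k _
  have hB0 : (if h : (0:Fin (d+1)) ∈ ({0} : Finset (Fin (d+1))) then
        (if k 0 = Fin.cast (show keepDims s R {0} 0 = s 0 by simp [keepDims, h]) i₀ then (1:ℝ) else 0)
      else C 0 (k 0) (Fin.cast (show keepDims s R {0} 0 = R 0 by simp [keepDims, h]) i₀))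
      = (if k 0 = Fin.cast keepDims_zero i₀ then (1:ℝ) else 0) := by
    rw [dif_pos (Finset.mem_singleton_self 0)]
  have hBl : (∏ l ∈ Finset.univ.erase (0 : Fin (d+1)),
        (∑ a, (if h : l ∈ ({0} : Finset (Fin (d+1))) then
          (if (k l) = Fin.cast (show keepDims s R {0} l = s l by simp [keepDims, h]) a then (1:ℝ) else 0)
        else C l (k l) (Fin.cast (show keepDims s R {0} l = R l by simp [keepDims, h]) a)) * x l a))
      = ∏ l ∈ Finset.univ.erase (0 : Fin (d+1)), ycon C x l (k l) := by
    apply Finset.prod_congr rfl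
    intro l hl
    have hl0 : l ≠ 0 := Finset.ne_of_mem_erase hl
    rw [ycon, dif_neg hl0]
    apply Finset.sum_congr rfl
    intro a _
    rw [dif_neg (by simpa [Finset.mem_singleton] using hl0)]
  rw [hB0, hBl]
  split_ifs with h
  · rw [mul_one]
  · rw [mul_zero, zero_mul]

lemma vnorm_gmap_partialContract (X : (∀ l, Fin (s l)) → ℝ)
    (C : ∀ l, Fin (s l) → Fin (R l) → ℝ)
    (x : ∀ l, Fin (keepDims s R ({0} : Finset (Fin (d+1))) l) → ℝ) :
    vnorm (gmap (partialContract X C {0}) x) = vnorm (gmap X (ycon C x)) := by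
  have : gmap (partialContract X C {0}) x
      = fun i₀ => gmap X (ycon C x) (Fin.cast keepDims_zero i₀) :=
    funext fun i₀ => gmap_partialContract X C x i₀
  rw [this, vnorm_cast]
end
section
variable {d : ℕ} {s : Fin (d+1) → ℕ}

lemma gmap_update_smul (T : (∀ l, Fin (s l)) → ℝ) (y : ∀ l, Fin (s l) → ℝ)
    (m : Fin (d+1)) (hm : m ≠ 0) (c : ℝ) :
    gmap T (Function.update y m (fun b => c * y m b)) = fun i₀ => c * gmap T y i₀ := by
  classical
  funext i₀
  rw [gmap, gmap, Finset.mul_sum]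
  apply Finset.sum_congr rfl
  intro j _
  have hmem : m ∈ Finset.univ.erase (0 : Fin (d+1)) :=
    Finset.mem_erase.mpr ⟨hm, Finset.mem_univ m⟩
  have hprod : (∏ l ∈ Finset.univ.erase (0 : Fin (d+1)),
      (Function.update y m (fun b => c * y m b)) l (j l))
      = c * ∏ l ∈ Finset.univ.erase (0 : Fin (d+1)), y l (j l) := by
    rw [← Finset.mul_prod_erase _ _ hmem, ← Finset.mul_prod_erase _ (fun l => y l (j l)) hmem]
    have e1 : (Function.update y m (fun b => c * y m b)) m (j m) = c * y m (j m) := by simp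
    rw [e1]
    have e2 : (∏ l ∈ (Finset.univ.erase (0:Fin (d+1))).erase m,
        (Function.update y m (fun b => c * y m b)) l (j l))
        = ∏ l ∈ (Finset.univ.erase (0:Fin (d+1))).erase m, y l (j l) := by
      apply Finset.prod_congr rfl
      intro l hl
      rw [Function.update_of_ne (Finset.ne_of_mem_erase hl)]
    rw [e2, mul_assoc]
  rw [hprod]
  split_ifs with h
  · ring
  · ring

lemma gmap_eq_zero (T : (∀ l, Fin (s l)) → ℝ) (y : ∀ l, Fin (s l) → ℝ)
    (m : Fin (d+1)) (hm : m ≠ 0) (hy : ∀ b, y m b = 0) (i₀ : Fin (s 0)) :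
    gmap T y i₀ = 0 := by
  rw [gmap]
  apply Finset.sum_eq_zero
  intro j _
  have hmem : m ∈ Finset.univ.erase (0 : Fin (d+1)) :=
    Finset.mem_erase.mpr ⟨hm, Finset.mem_univ m⟩
  have : (∏ l ∈ Finset.univ.erase (0 : Fin (d+1)), y l (j l)) = 0 :=
    Finset.prod_eq_zero hmem (hy (j m))
  rw [this, mul_zero]
  split_ifs <;> rfl

lemma vnorm_orth {sl Rl : ℕ} (A : Fin sl → Fin Rl → ℝ)
    (hA : ∀ k k', ∑ b, A b k * A b k' = if k = k' then (1:ℝ) else 0)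
    (z : Fin Rl → ℝ) : vnorm (fun b => ∑ a, A b a * z a) = vnorm z := by
  unfold vnorm
  congr 1
  have step : ∀ b : Fin sl, (∑ a, A b a * z a) ^ 2
      = ∑ a, ∑ a', (A b a * A b a') * (z a * z a') := by
    intro b
    rw [sq, Finset.sum_mul_sum]
    apply Finset.sum_congr rfl; intro a _
    apply Finset.sum_congr rfl; intro a' _
    ring
  simp only [step]
  rw [Finset.sum_comm]
  have : ∀ a : Fin Rl, (∑ b, ∑ a', (A b a * A b a') * (z a * z a'))
      = ∑ a', (if a = a' then (1:ℝ) else 0) * (z a * z a') := by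
    intro a
    rw [Finset.sum_comm]
    apply Finset.sum_congr rfl; intro a' _
    rw [← Finset.sum_mul, hA a a']
  simp only [this]
  apply Finset.sum_congr rfl
  intro a _
  simp [ite_mul, sq]
end
section
variable {d : ℕ} {s : Fin (d+1) → ℕ}

lemma tnorm_bddAbove (T : (∀ i, Fin (s i)) → ℝ) :
    BddAbove {r | ∃ x : (∀ i, Fin (s i) → ℝ), unitInputs x ∧ r = vnorm (gmap T x)} := by
  refine ⟨∑ _i₀ : Fin (s 0), ∑ j : (∀ i, Fin (s i)), |T j|, ?_⟩
  rintro r ⟨x, hx, rfl⟩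
  calc vnorm (gmap T x) ≤ ∑ i₀, |gmap T x i₀| := vnorm_le_sum_abs _
  _ ≤ ∑ _i₀ : Fin (s 0), ∑ j : (∀ i, Fin (s i)), |T j| := by
      apply Finset.sum_le_sum; intro i₀ _
      calc |gmap T x i₀| ≤ ∑ j, |if j 0 = i₀ then T j * ∏ k ∈ Finset.univ.erase (0 : Fin (d+1)), x k (j k) else 0| :=
            Finset.abs_sum_le_sum_abs _ _
      _ ≤ ∑ j : (∀ i, Fin (s i)), |T j| := by
          apply Finset.sum_le_sum; intro j _
          split_ifs with h
          · rw [abs_mul]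
            calc |T j| * |∏ k ∈ Finset.univ.erase (0 : Fin (d+1)), x k (j k)|
                ≤ |T j| * 1 := by
                  apply mul_le_mul_of_nonneg_left _ (abs_nonneg _)
                  rw [Finset.abs_prod]
                  apply Finset.prod_le_one (fun k _ => abs_nonneg _)
                  intro k hk
                  exact le_trans (abs_le_vnorm _ _) (le_of_eq (hx k (Finset.ne_of_mem_erase hk)))
            _ = |T j| := mul_one _
          · simp

lemma tnorm_nonneg (T : (∀ i, Fin (s i)) → ℝ) : 0 ≤ tnorm T :=
  Real.sSup_nonneg (by rintro r ⟨x, hx, rfl⟩; exact vnorm_nonneg _)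

lemma le_tnorm (T : (∀ i, Fin (s i)) → ℝ) (x : ∀ i, Fin (s i) → ℝ) (hx : unitInputs x) :
    vnorm (gmap T x) ≤ tnorm T :=
  le_csSup (tnorm_bddAbove T) ⟨x, hx, rfl⟩

lemma tinf_le (T : (∀ i, Fin (s i)) → ℝ) (x : ∀ i, Fin (s i) → ℝ) (hx : unitInputs x) :
    tinf T ≤ vnorm (gmap T x) :=
  csInf_le ⟨0, by rintro r ⟨x', hx', rfl⟩; exact vnorm_nonneg _⟩ ⟨x, hx, rfl⟩

end
section
variable {d : ℕ} {s R : Fin (d+1) → ℕ}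

lemma vnorm_matvec_orth {sl Rl : ℕ} (A : Fin sl → Fin Rl → ℝ)
    (hA : ∀ k k', ∑ b, A b k * A b k' = if k = k' then (1:ℝ) else 0)
    (z : Fin Rl → ℝ) : vnorm (matvec A z) = vnorm z :=
  vnorm_orth A hA z

lemma ycon_eq_matvec (C : ∀ l, Fin (s l) → Fin (R l) → ℝ)
    (x : ∀ l, Fin (keepDims s R ({0} : Finset (Fin (d+1))) l) → ℝ)
    (l : Fin (d+1)) (hl : l ≠ 0) :
    ycon C x l = matvec (C l) (fun a => x l (Fin.cast (keepDims_ne l hl).symm a)) := by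
  funext b
  rw [ycon, dif_neg hl, matvec,
    ← sum_cast (keepDims_ne l hl)
      (fun a => C l b a * x l (Fin.cast (keepDims_ne l hl).symm a))]
  apply Finset.sum_congr rfl
  intro a _
  congr 1

lemma zvec_unit (x : ∀ l, Fin (keepDims s R ({0} : Finset (Fin (d+1))) l) → ℝ)
    (hx : unitInputs x) (l : Fin (d+1)) (hl : l ≠ 0) :
    vnorm (fun a : Fin (R l) => x l (Fin.cast (keepDims_ne l hl).symm a)) = 1 := by
  rw [vnorm_cast (keepDims_ne l hl).symm (x l)]
  exact hx l hl

lemma ycon_unit (C : ∀ l, Fin (s l) → Fin (R l) → ℝ)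
    (x : ∀ l, Fin (keepDims s R ({0} : Finset (Fin (d+1))) l) → ℝ)
    (hx : unitInputs x) (l : Fin (d+1)) (hl : l ≠ 0)
    (hCl : ∀ k k', ∑ b, C l b k * C l b k' = if k = k' then (1:ℝ) else 0) :
    vnorm (ycon C x l) = 1 := by
  rw [ycon_eq_matvec C x l hl, vnorm_matvec_orth (C l) hCl]
  exact zvec_unit x hx l hl
end
/-- per-term inequality of Theorem A.5 of the paper. `X` is an order-`N`
tensor (`N = d+1 ≥ 4`, mode `0` output) with `I(X) > 0`, each `A l` (`l ≠ 0`) has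
orthonormal columns, `Y¹ = X ×₂ A²ᵀ ⋯ ×_N A^Nᵀ`, and at the two distinct input modes
`i, j` the perturbation matrices satisfy `‖dA^{(i)}‖₂ ≤ ε`, `‖dA^{(j)}‖₂ ≤ ε`.  Then
`‖Y^{(i,j,1)} ×ᵢ dA^{(i)ᵀ} ×ⱼ dA^{(j)ᵀ}‖₂ ≤ κ(X) ε² ‖Y¹‖₂`. -/
theorem tucker_pp_second_order_term_cond {d : ℕ} (hd : 3 ≤ d) {s R : Fin (d+1) → ℕ}
    (X : (∀ l, Fin (s l)) → ℝ) (hX : 0 < tinf X)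
    (A : ∀ l, Fin (s l) → Fin (R l) → ℝ)
    (hA : ∀ l : Fin (d+1), l ≠ 0 →
      ∀ k k' : Fin (R l), ∑ i, A l i k * A l i k' = if k = k' then (1:ℝ) else 0)
    (i j : Fin (d+1)) (hi : i ≠ 0) (hj : j ≠ 0) (hij : i ≠ j)
    (dAi : Fin (s i) → Fin (R i) → ℝ) (dAj : Fin (s j) → Fin (R j) → ℝ)
    (ε : ℝ) (hdAi : mnorm dAi ≤ ε) (hdAj : mnorm dAj ≤ ε) :
    tnorm (partialContract X (Function.update (Function.update A i dAi) j dAj) {0}) ≤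
      tcond X * ε^2 * tnorm (partialContract X A {0}) := by
  classical
  have hε : 0 ≤ ε := le_trans (mnorm_nonneg dAi) hdAi
  have htX : 0 ≤ tnorm X := tnorm_nonneg X
  have htY : 0 ≤ tnorm (partialContract X A {0}) := tnorm_nonneg _
  have hcond : 0 ≤ tcond X := div_nonneg htX hX.le
  have hRHS : 0 ≤ tcond X * ε^2 * tnorm (partialContract X A {0}) :=
    mul_nonneg (mul_nonneg hcond (sq_nonneg ε)) htY
  set A' : ∀ l, Fin (s l) → Fin (R l) → ℝ :=
    Function.update (Function.update A i dAi) j dAj with hA'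
  have hA'i : A' i = dAi := by
    rw [hA', Function.update_of_ne hij, Function.update_self]
  have hA'j : A' j = dAj := by
    rw [hA', Function.update_self]
  have hA'other : ∀ l, l ≠ i → l ≠ j → A' l = A l := by
    intro l hli hlj
    rw [hA', Function.update_of_ne hlj, Function.update_of_ne hli]
  apply Real.sSup_le _ hRHS
  rintro r ⟨x, hx, rfl⟩
  rw [vnorm_gmap_partialContract X A' x]
  set y := ycon A' x with hy
  -- the two perturbed directions
  have hyi : y i = matvec dAi (fun a => x i (Fin.cast (keepDims_ne i hi).symm a)) := by
    rw [hy, ycon_eq_matvec A' x i hi, hA'i]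
  have hyj : y j = matvec dAj (fun a => x j (Fin.cast (keepDims_ne j hj).symm a)) := by
    rw [hy, ycon_eq_matvec A' x j hj, hA'j]
  set ci := vnorm (y i) with hci
  set cj := vnorm (y j) with hcj
  have hci0 : 0 ≤ ci := vnorm_nonneg _
  have hcj0 : 0 ≤ cj := vnorm_nonneg _
  have hciε : ci ≤ ε := by
    rw [hci, hyi]
    exact le_trans (vnorm_matvec_le dAi _ (zvec_unit x hx i hi)) hdAi
  have hcjε : cj ≤ ε := by
    rw [hcj, hyj]
    exact le_trans (vnorm_matvec_le dAj _ (zvec_unit x hx j hj)) hdAj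
  have hyunit : ∀ l, l ≠ 0 → l ≠ i → l ≠ j → vnorm (y l) = 1 := by
    intro l hl hli hlj
    rw [hy]
    refine ycon_unit A' x hx l hl ?_
    rw [hA'other l hli hlj]
    exact hA l hl
  -- dispose of the degenerate cases
  by_cases hcieq : ci = 0
  · have hzero : ∀ b, y i b = 0 := vnorm_eq_zero (by rw [← hci]; exact hcieq)
    have : gmap X y = fun _ => (0:ℝ) := funext fun i₀ => gmap_eq_zero X y i hi hzero i₀
    rw [this]
    simpa [vnorm] using hRHS
  by_cases hcjeq : cj = 0
  · have hzero : ∀ b, y j b = 0 := vnorm_eq_zero (by rw [← hcj]; exact hcjeq)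
    have : gmap X y = fun _ => (0:ℝ) := funext fun i₀ => gmap_eq_zero X y j hj hzero i₀
    rw [this]
    simpa [vnorm] using hRHS
  have hcipos : 0 < ci := lt_of_le_of_ne hci0 (Ne.symm hcieq)
  have hcjpos : 0 < cj := lt_of_le_of_ne hcj0 (Ne.symm hcjeq)
  -- normalize the two perturbed directions
  set y1 := Function.update y i (fun b => (1/ci) * y i b) with hy1
  set y2 := Function.update y1 j (fun b => (1/cj) * y1 j b) with hy2
  have hy1i : y1 i = fun b => (1/ci) * y i b := by rw [hy1, Function.update_self]
  have hy1j : y1 j = y j := by rw [hy1, Function.update_of_ne (Ne.symm hij)]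
  have hy2j : y2 j = fun b => (1/cj) * y j b := by
    rw [hy2, Function.update_self, hy1j]
  have hy2i : y2 i = y1 i := by rw [hy2, Function.update_of_ne hij]
  have hy2other : ∀ l, l ≠ i → l ≠ j → y2 l = y l := by
    intro l hli hlj
    rw [hy2, Function.update_of_ne hlj, hy1, Function.update_of_ne hli]
  have e1 : Function.update y1 i (fun b => ci * y1 i b) = y := by
    have : (fun b => ci * y1 i b) = y i := by
      funext b; rw [hy1i]; field_simp
    rw [this, hy1, Function.update_idem, Function.update_eq_self]
  have e2 : Function.update y2 j (fun b => cj * y2 j b) = y1 := by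
    have : (fun b => cj * y2 j b) = y1 j := by
      funext b; rw [hy2j, hy1j]; field_simp
    rw [this, hy2, Function.update_idem, Function.update_eq_self]
  have g1 : gmap X y = fun i₀ => ci * gmap X y1 i₀ := by
    rw [← e1]; exact gmap_update_smul X y1 i hi ci
  have g2 : gmap X y1 = fun i₀ => cj * gmap X y2 i₀ := by
    rw [← e2]; exact gmap_update_smul X y2 j hj cj
  have gtot : gmap X y = fun i₀ => (ci * cj) * gmap X y2 i₀ := by
    rw [g1, g2]; funext i₀; ring
  have hvn : vnorm (gmap X y) = (ci * cj) * vnorm (gmap X y2) := by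
    rw [gtot, vnorm_smul, abs_of_nonneg (mul_nonneg hci0 hcj0)]
  -- y2 has unit inputs
  have hy2unit : unitInputs y2 := by
    intro l hl
    by_cases hli : l = i
    · subst hli
      rw [hy2i, hy1i, vnorm_smul, abs_of_nonneg (by positivity : (0:ℝ) ≤ 1/ci), ← hci]
      field_simp
    by_cases hlj : l = j
    · subst hlj
      rw [hy2j, vnorm_smul, abs_of_nonneg (by positivity : (0:ℝ) ≤ 1/cj), ← hcj]
      field_simp
    · rw [hy2other l hli hlj]
      exact hyunit l hl hli hlj
  -- the unperturbed contraction dominates tinf X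
  have hIY : tinf X ≤ tnorm (partialContract X A {0}) := by
    have hunitA : unitInputs (ycon A x) := fun l hl => ycon_unit A x hx l hl (hA l hl)
    calc tinf X ≤ vnorm (gmap X (ycon A x)) := tinf_le X _ hunitA
    _ = vnorm (gmap (partialContract X A {0}) x) := (vnorm_gmap_partialContract X A x).symm
    _ ≤ tnorm (partialContract X A {0}) := le_tnorm _ x hx
  -- put everything together
  calc vnorm (gmap X y) = (ci * cj) * vnorm (gmap X y2) := hvn
  _ ≤ (ε * ε) * tnorm X := by
      apply mul_le_mul (mul_le_mul hciε hcjε hcj0 hε) (le_tnorm X y2 hy2unit)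
        (vnorm_nonneg _) (mul_nonneg hε hε)
  _ = ε^2 * (tcond X * tinf X) := by
      rw [tcond, div_mul_cancel₀ _ (ne_of_gt hX)]; ring
  _ ≤ ε^2 * (tcond X * tnorm (partialContract X A {0})) := by
      apply mul_le_mul_of_nonneg_left (mul_le_mul_of_nonneg_left hIY hcond) (sq_nonneg ε)
  _ = tcond X * ε^2 * tnorm (partialContract X A {0}) := by ring
end

section
/- Let T be the 4×4×4 real tensor whose slices S_k(i,j) = T(i,j,k) are: S₁ = diag(1,1,1,−1); S₂ with nonzero entries S₂(1,2)=1, S₂(2,1)=−1, S₂(3,4)=1, S₂(4,3)=1; S₃ with nonzero entries S₃(1,4)=1, S₃(2,3)=1, S₃(3,2)=−1, S₃(4,1)=1; and S₄ with nonzero entries S₄(1,3)=−1, S₄(2,4)=1, S₄(3,1)=1, S₄(4,2)=1. Then for all x, y ∈ ℝ⁴, ‖g_T(x,y)‖₂ = ‖x‖₂ ‖y‖₂. In particular ‖T‖₂ = I(T) = 1, so T has unit tensor condition number κ(T) = 1. -/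
open scoped BigOperators

/-- The bilinear map `g_T` of an order-3 tensor: `g_T(x,y)(i) = ∑_{j,k} T(i,j,k) x(j) y(k)`. -/
noncomputable def g3 {s₁ s₂ s₃ : ℕ} (T : Fin s₁ → Fin s₂ → Fin s₃ → ℝ)
    (x : Fin s₂ → ℝ) (y : Fin s₃ → ℝ) : Fin s₁ → ℝ :=
  fun i => ∑ j, ∑ k, T i j k * x j * y k

/-- Spectral norm of an order-3 tensor. -/
noncomputable def tnorm3 {s₁ s₂ s₃ : ℕ} (T : Fin s₁ → Fin s₂ → Fin s₃ → ℝ) : ℝ :=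
  sSup {r | ∃ x y, vnorm x = 1 ∧ vnorm y = 1 ∧ r = vnorm (g3 T x y)}

/-- `I(T)` for an order-3 tensor. -/
noncomputable def tinf3 {s₁ s₂ s₃ : ℕ} (T : Fin s₁ → Fin s₂ → Fin s₃ → ℝ) : ℝ :=
  sInf {r | ∃ x y, vnorm x = 1 ∧ vnorm y = 1 ∧ r = vnorm (g3 T x y)}

/-- The `4×4×4` tensor `T(i,j,k) = S_k(i,j)` with the four slices of the paper. -/
noncomputable def T17 : Fin 4 → Fin 4 → Fin 4 → ℝ :=
  fun i j k =>
    ![![![(1:ℝ),0,0,0], ![0,1,0,0], ![0,0,1,0], ![0,0,0,-1]],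
      ![![0,1,0,0], ![-1,0,0,0], ![0,0,0,1], ![0,0,1,0]],
      ![![0,0,0,1], ![0,0,1,0], ![0,-1,0,0], ![1,0,0,0]],
      ![![0,0,-1,0], ![0,0,0,1], ![1,0,0,0], ![0,1,0,0]]] k i j

lemma key (x y : Fin 4 → ℝ) :
    (∑ i, (g3 T17 x y i) ^ 2) = (∑ j, x j ^ 2) * (∑ k, y k ^ 2) := by
  simp only [g3, T17, Fin.sum_univ_four]
  simp [Matrix.cons_val_zero, Matrix.cons_val_one, Matrix.head_cons,
    Matrix.cons_val_two, Matrix.cons_val_three, Matrix.tail_cons,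
    Matrix.vecHead, Matrix.vecTail]
  ring

lemma main1 (x y : Fin 4 → ℝ) : vnorm (g3 T17 x y) = vnorm x * vnorm y := by
  rw [vnorm, key, Real.sqrt_mul (by positivity)]
  rfl

lemma setone : {r | ∃ x y, vnorm x = 1 ∧ vnorm y = 1 ∧ r = vnorm (g3 T17 x y)} = {1} := by
  ext r
  simp only [Set.mem_setOf_eq, Set.mem_singleton_iff]
  constructor
  · rintro ⟨x, y, hx, hy, rfl⟩
    rw [main1, hx, hy, one_mul]
  · rintro rfl
    refine ⟨fun i => if i = 0 then 1 else 0, fun i => if i = 0 then 1 else 0, ?_, ?_, ?_⟩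
    · simp [vnorm, Fin.sum_univ_four]
    · simp [vnorm, Fin.sum_univ_four]
    · rw [main1]
      simp [vnorm, Fin.sum_univ_four]

/-- For the `4×4×4` tensor above, `‖g_T(x,y)‖₂ = ‖x‖₂‖y‖₂` for all
`x, y ∈ ℝ⁴`; in particular `‖T‖₂ = I(T) = 1`, so `κ(T) = 1`. -/
theorem perfectly_conditioned_4 :
    (∀ x y : Fin 4 → ℝ, vnorm (g3 T17 x y) = vnorm x * vnorm y) ∧
    tnorm3 T17 = 1 ∧ tinf3 T17 = 1 ∧ tnorm3 T17 / tinf3 T17 = 1 := by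
  refine ⟨main1, ?_, ?_, ?_⟩
  · rw [tnorm3, setone, csSup_singleton]
  · rw [tinf3, setone, csInf_singleton]
  · rw [tnorm3, tinf3, setone, csSup_singleton, csInf_singleton]; norm_num
end
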